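/- Let H, H′ be Hamiltonians in cellular algebras W, W′ with a weak isomorphism φ: W → W′ satisfying φ(H) = H′. Writing e^{−itH} = Σ_{R∈R} x_R(t)·R over basis relations R of W, the Green's function values of H′ are exactly {x_R(t)}, with e^{−itH′} = Σ_{R∈R} x_R(t)·φ(R); moreover each value x_R(t) occurs with the same multiplicity m_R = tr(R R^T) = tr(φ(R) φ(R)^T) for both. -/

import Mathlib

open Matrix BigOperators
open scoped Classical

/-- The all-ones matrix `J`. -/
def matJ (V : Type*) : Matrix V V ℂ := Matrix.of fun _ _ => (1 : ℂ)

/-- A matrix with all entries in `{0,1}`. -/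
def Is01 {V : Type*} (M : Matrix V V ℂ) : Prop := ∀ i j, M i j = 0 ∨ M i j = 1

/-- A cellular algebra: a subalgebra of `Mat_V` closed under Hadamard multiplication and
conjugate transpose, containing `I` (automatic) and `J`. -/
def IsCellular {V : Type*} [Fintype V] [DecidableEq V]
    (W : Subalgebra ℂ (Matrix V V ℂ)) : Prop :=
  (∀ A B : Matrix V V ℂ, A ∈ W → B ∈ W → A ⊙ B ∈ W) ∧
  (∀ A : Matrix V V ℂ, A ∈ W → Aᴴ ∈ W) ∧
  matJ V ∈ W

/-- `B` is a vector-space basis of `W` consisting of 0-1 matrices. -/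
def Is01Basis {V : Type*} [Fintype V] [DecidableEq V]
    (W : Subalgebra ℂ (Matrix V V ℂ)) (B : Finset (Matrix V V ℂ)) : Prop :=
  (∀ R ∈ B, Is01 R) ∧
  LinearIndependent ℂ (fun x : {M : Matrix V V ℂ // M ∈ B} => x.val) ∧
  Submodule.span ℂ (B : Set (Matrix V V ℂ)) = Subalgebra.toSubmodule W

/-- The diagonal 0-1 indicator matrix `I_X` of a subset `X ⊆ V`. -/
def cellInd {V : Type*} [DecidableEq V] (X : Finset V) : Matrix V V ℂ :=
  Matrix.of fun i j => if i = j ∧ i ∈ X then (1 : ℂ) else 0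

/-- A weak isomorphism of cellular algebras: a bijection `W → W'` preserving addition, scalar
multiplication, matrix multiplication, Hadamard multiplication and conjugate transpose. -/
def IsWeakIso {V V' : Type*} [Fintype V] [DecidableEq V] [Fintype V'] [DecidableEq V']
    (W : Subalgebra ℂ (Matrix V V ℂ)) (W' : Subalgebra ℂ (Matrix V' V' ℂ))
    (φ : Matrix V V ℂ → Matrix V' V' ℂ) : Prop :=
  Set.BijOn φ (W : Set (Matrix V V ℂ)) (W' : Set (Matrix V' V' ℂ)) ∧
  (∀ A ∈ W, ∀ B ∈ W, φ (A + B) = φ A + φ B) ∧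
  (∀ (c : ℂ), ∀ A ∈ W, φ (c • A) = c • φ A) ∧
  (∀ A ∈ W, ∀ B ∈ W, φ (A * B) = φ A * φ B) ∧
  (∀ A ∈ W, ∀ B ∈ W, φ (A ⊙ B) = φ A ⊙ φ B) ∧
  (∀ A ∈ W, φ Aᴴ = (φ A)ᴴ)

/-!
A weak isomorphism restricts to a `ℂ`-algebra homomorphism on the finite-dimensional algebra `W`,
so it is continuous there and commutes with `exp`; applying it to the expansion of `exp (-itH)`
gives that of `exp (-itH')`. For a 0-1 matrix `R`, `tr (R Rᵀ)` is the sum of the entries of `R`,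
which is read off from `J R J = (∑ R) • J`; as `φ` fixes `J` (the unit of the Hadamard product),
it preserves entry sums.
-/

theorem AlgHom.map_exp_of_finiteDimensional {𝕜 𝔸 𝔹 : Type*} [RCLike 𝕜]
    [NormedRing 𝔸] [NormedAlgebra 𝕜 𝔸] [FiniteDimensional 𝕜 𝔸] [NormedRing 𝔹] [NormedAlgebra 𝕜 𝔹]
    (f : 𝔸 →ₐ[𝕜] 𝔹) (x : 𝔸) :
    f (NormedSpace.exp x) = NormedSpace.exp (f x) :=
  letI := NormedAlgebra.restrictScalars ℚ 𝕜 𝔸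
  letI := Algebra.restrictScalars ℚ 𝕜 𝔹
  haveI : CompleteSpace 𝔸 := FiniteDimensional.complete 𝕜 𝔸
  NormedSpace.map_exp f f.toLinearMap.continuous_of_finiteDimensional x

theorem hadamard_matJ {V : Type*} (A : Matrix V V ℂ) : A ⊙ matJ V = A := by
  ext i j
  simp [matJ]

theorem matJ_mul_mul_matJ {V : Type*} [Fintype V] (M : Matrix V V ℂ) :
    matJ V * M * matJ V = (∑ i, ∑ j, M i j) • matJ V := by
  ext i j
  simp only [mul_apply, matJ, of_apply, Matrix.smul_apply, mul_one, one_mul, smul_eq_mul]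
  exact Finset.sum_comm

theorem Is01.trace_mul_transpose {V : Type*} [Fintype V] {M : Matrix V V ℂ} (hM : Is01 M) :
    (M * Mᵀ).trace = ∑ i, ∑ j, M i j := by
  refine Finset.sum_congr rfl fun i _ => Finset.sum_congr rfl fun j _ => ?_
  rcases hM i j with h | h <;> simp [h]

namespace Is01Basis

variable {V : Type*} [Fintype V] [DecidableEq V] {W : Subalgebra ℂ (Matrix V V ℂ)}
  {B : Finset (Matrix V V ℂ)} {R : Matrix V V ℂ}

theorem mem (hB : Is01Basis W B) (hR : R ∈ B) : R ∈ W := by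
  rw [← Subalgebra.mem_toSubmodule, ← hB.2.2]
  exact Submodule.subset_span hR

theorem ne_zero (hB : Is01Basis W B) (hR : R ∈ B) : R ≠ 0 :=
  hB.2.1.ne_zero ⟨R, hR⟩

end Is01Basis

namespace IsWeakIso

variable {V V' : Type*} [Fintype V] [DecidableEq V] [Fintype V'] [DecidableEq V']
  {W : Subalgebra ℂ (Matrix V V ℂ)} {W' : Subalgebra ℂ (Matrix V' V' ℂ)}
  {φ : Matrix V V ℂ → Matrix V' V' ℂ}

theorem map_add (hφ : IsWeakIso W W' φ) {A B : Matrix V V ℂ} (hA : A ∈ W) (hB : B ∈ W) :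
    φ (A + B) = φ A + φ B :=
  hφ.2.1 A hA B hB

theorem map_smul (hφ : IsWeakIso W W' φ) (c : ℂ) {A : Matrix V V ℂ} (hA : A ∈ W) :
    φ (c • A) = c • φ A :=
  hφ.2.2.1 c A hA

theorem map_mul (hφ : IsWeakIso W W' φ) {A B : Matrix V V ℂ} (hA : A ∈ W) (hB : B ∈ W) :
    φ (A * B) = φ A * φ B :=
  hφ.2.2.2.1 A hA B hB

theorem map_hadamard (hφ : IsWeakIso W W' φ) {A B : Matrix V V ℂ} (hA : A ∈ W) (hB : B ∈ W) :
    φ (A ⊙ B) = φ A ⊙ φ B :=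
  hφ.2.2.2.2.1 A hA B hB

theorem map_zero (hφ : IsWeakIso W W' φ) : φ 0 = 0 := by
  simpa using hφ.map_smul 0 (zero_mem W)

theorem map_one (hφ : IsWeakIso W W' φ) : φ 1 = 1 := by
  obtain ⟨A, hA, hA1⟩ := hφ.1.surjOn (one_mem W')
  simpa [hA1] using (hφ.map_mul hA (one_mem W)).symm

def toAlgHom (hφ : IsWeakIso W W' φ) : W →ₐ[ℂ] Matrix V' V' ℂ where
  toFun A := φ A
  map_one' := hφ.map_one
  map_mul' A B := hφ.map_mul A.2 B.2
  map_zero' := hφ.map_zero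
  map_add' A B := hφ.map_add A.2 B.2
  commutes' c := by
    simp [Algebra.algebraMap_eq_smul_one, hφ.map_smul c (one_mem W), hφ.map_one]

theorem map_sum_smul (hφ : IsWeakIso W W' φ) {ι : Type*} (s : Finset ι) (c : ι → ℂ)
    {A : ι → Matrix V V ℂ} (hA : ∀ i ∈ s, A i ∈ W) :
    φ (∑ i ∈ s, c i • A i) = ∑ i ∈ s, c i • φ (A i) := by
  induction s using Finset.induction_on with
  | empty => simpa using hφ.map_zero
  | insert i s hi ih =>
    rw [Finset.forall_mem_insert] at hA
    rw [Finset.sum_insert hi, Finset.sum_insert hi,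
      hφ.map_add (W.smul_mem hA.1 _) (sum_mem fun j hj => W.smul_mem (hA.2 j hj) _),
      hφ.map_smul _ hA.1, ih hA.2]

section

/- `Matrix` has no canonical norm; `exp` only depends on the topology, so any norm will do. -/
attribute [local instance] Matrix.linftyOpNormedRing Matrix.linftyOpNormedAlgebra

theorem map_exp (hφ : IsWeakIso W W' φ) {A : Matrix V V ℂ} (hA : A ∈ W) :
    φ (NormedSpace.exp A) = NormedSpace.exp (φ A) :=
  (congrArg φ (W.val.map_exp_of_finiteDimensional ⟨A, hA⟩)).symm.trans
    (hφ.toAlgHom.map_exp_of_finiteDimensional ⟨A, hA⟩)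

end

theorem map_matJ (hφ : IsWeakIso W W' φ) (hJ : matJ V ∈ W) (hJ' : matJ V' ∈ W') :
    φ (matJ V) = matJ V' := by
  obtain ⟨A, hA, hAJ⟩ := hφ.1.surjOn hJ'
  have h := hφ.map_hadamard hA hJ
  rw [hadamard_matJ, hAJ] at h
  ext i j
  simpa [matJ] using (congr_fun₂ h i j).symm

theorem sum_entries_map [Nonempty V'] (hφ : IsWeakIso W W' φ) (hJ : matJ V ∈ W)
    (hJ' : matJ V' ∈ W') {R : Matrix V V ℂ} (hR : R ∈ W) :
    ∑ i, ∑ j, φ R i j = ∑ i, ∑ j, R i j := by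
  have h : (∑ i, ∑ j, φ R i j) • matJ V' = (∑ i, ∑ j, R i j) • matJ V' :=
    calc (∑ i, ∑ j, φ R i j) • matJ V' = matJ V' * φ R * matJ V' := (matJ_mul_mul_matJ _).symm
      _ = φ (matJ V * R * matJ V) := by
        rw [hφ.map_mul (W.mul_mem hJ hR) hJ, hφ.map_mul hJ hR, hφ.map_matJ hJ hJ']
      _ = (∑ i, ∑ j, R i j) • matJ V' := by
        rw [matJ_mul_mul_matJ, hφ.map_smul _ hJ, hφ.map_matJ hJ hJ']
  obtain ⟨i⟩ := ‹Nonempty V'›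
  simpa [matJ] using congr_fun₂ h i i

end IsWeakIso

theorem weakIso_greens_functions_general {V V' : Type*}
    [Fintype V] [DecidableEq V] [Fintype V'] [DecidableEq V']
    (W : Subalgebra ℂ (Matrix V V ℂ)) (W' : Subalgebra ℂ (Matrix V' V' ℂ))
    (hW : IsCellular W) (hW' : IsCellular W')
    (B : Finset (Matrix V V ℂ)) (hB : Is01Basis W B)
    (B' : Finset (Matrix V' V' ℂ)) (hB' : Is01Basis W' B')
    (H : Matrix V V ℂ) (H' : Matrix V' V' ℂ) (hH : H ∈ W)
    (φ : Matrix V V ℂ → Matrix V' V' ℂ) (hφ : IsWeakIso W W' φ)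
    (hφB : Set.BijOn φ (B : Set (Matrix V V ℂ)) (B' : Set (Matrix V' V' ℂ)))
    (hφH : φ H = H') :
    (∀ t : ℝ, ∀ x : Matrix V V ℂ → ℂ,
      NormedSpace.exp ((-(Complex.I * t)) • H) = (∑ R ∈ B, x R • R) →
      NormedSpace.exp ((-(Complex.I * t)) • H') = (∑ R ∈ B, x R • φ R)) ∧
    (∀ R ∈ B, (R * Rᵀ).trace = (φ R * (φ R)ᵀ).trace) := by
  refine ⟨fun t x hx => ?_, fun R hR => ?_⟩
  · rw [← hφH, ← hφ.map_smul _ hH, ← hφ.map_exp (W.smul_mem hH _), hx,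
      hφ.map_sum_smul B x fun _ => hB.mem]
  · have hφR : φ R ∈ B' := hφB.mapsTo hR
    obtain ⟨i, -⟩ := Function.ne_iff.mp (hB'.ne_zero hφR)
    have : Nonempty V' := ⟨i⟩
    rw [(hB.1 R hR).trace_mul_transpose, (hB'.1 _ hφR).trace_mul_transpose,
      hφ.sum_entries_map hW.2.2 hW'.2.2 (hB.mem hR)]

/-- expanding exp(-itH) in the 0-1 basis, the Green's function values of H'
are the same coefficients against the image basis, with the same multiplicities
tr(R Rᵀ) = tr(φ(R) φ(R)ᵀ). -/
theorem weakIso_greens_functions {V V' : Type*}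
    [Fintype V] [DecidableEq V] [Fintype V'] [DecidableEq V']
    (W : Subalgebra ℂ (Matrix V V ℂ)) (W' : Subalgebra ℂ (Matrix V' V' ℂ))
    (hW : IsCellular W) (hW' : IsCellular W')
    (B : Finset (Matrix V V ℂ)) (hB : Is01Basis W B)
    (B' : Finset (Matrix V' V' ℂ)) (hB' : Is01Basis W' B')
    (H : Matrix V V ℂ) (H' : Matrix V' V' ℂ) (hH : H ∈ W) (hH' : H' ∈ W')
    (φ : Matrix V V ℂ → Matrix V' V' ℂ) (hφ : IsWeakIso W W' φ)
    (hφB : Set.BijOn φ (B : Set (Matrix V V ℂ)) (B' : Set (Matrix V' V' ℂ)))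
    (hφH : φ H = H') :
    (∀ t : ℝ, ∀ x : Matrix V V ℂ → ℂ,
      NormedSpace.exp ((-(Complex.I * t)) • H) = (∑ R ∈ B, x R • R) →
      NormedSpace.exp ((-(Complex.I * t)) • H') = (∑ R ∈ B, x R • φ R)) ∧
    (∀ R ∈ B, (R * Rᵀ).trace = (φ R * (φ R)ᵀ).trace) :=
  weakIso_greens_functions_general W W' hW hW' B hB B' hB' H H' hH φ hφ hφB hφH
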